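/- Let n and N be positive real numbers and set ν_n(N) = (√(1 + n/(2N²)) + √(n/(2N²)))^{−2}. Then 0 < ν_n(N) < 1 and n · cosh(4 · artanh(√(ν_n(N)))) = 4N² + n. Consequently, for R > 0 one has n · cosh(4R) ≤ 4N² + n if and only if R ≤ artanh(√(ν_n(N))). -/

import Mathlib

/-- The inverse hyperbolic tangent on `(−1,1)`: `artanh x = (1/2) log((1+x)/(1−x))`. -/
noncomputable def stmt6.artanh (x : ℝ) : ℝ := (1 / 2) * Real.log ((1 + x) / (1 - x))

/-- `ν_n(N) = (√(1 + n/(2N²)) + √(n/(2N²)))^{−2}`. -/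
noncomputable def stmt6.nu (n N : ℝ) : ℝ :=
  (Real.sqrt (1 + n / (2 * N ^ 2)) + Real.sqrt (n / (2 * N ^ 2)))⁻¹ ^ 2

lemma stmt6.cosh_four_artanh (x : ℝ) (h0 : 0 ≤ x) (h1 : x < 1) :
    Real.cosh (4 * stmt6.artanh x) = (((1+x)/(1-x))^2 + ((1-x)/(1+x))^2) / 2 := by
  have hy : (0:ℝ) < (1+x)/(1-x) := div_pos (by linarith) (by linarith)
  rw [stmt6.artanh, Real.cosh_eq]
  have h4 : 4 * (1 / 2 * Real.log ((1 + x) / (1 - x))) = Real.log (((1+x)/(1-x))^2) := by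
    rw [Real.log_pow]; ring
  rw [h4, Real.exp_log (by positivity), ← Real.log_inv, Real.exp_log (by positivity)]
  rw [← inv_pow, inv_div]

lemma stmt6.key_alg (n N u v : ℝ) (hu : 0 < u) (hv : 1 < v)
    (hu2 : 2 * N ^ 2 * u ^ 2 = n) (hv2 : v ^ 2 = 1 + u ^ 2) :
    n * ((((v+u+1)/(v+u-1))^2 + ((v+u-1)/(v+u+1))^2) / 2) = 4 * N ^ 2 + n := by
  have h1 : v + u - 1 ≠ 0 := by nlinarith
  have h2 : v + u + 1 ≠ 0 := by nlinarith
  field_simp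
  linear_combination (-16*(v+u)^2) * hu2 +
    (2*n*(v^2+4*u*v+3*u^2-1) - 2*(4*N^2+n)*((v+u)^2-1+2*u*(v+u))) * hv2

/-- For `n, N > 0`: `0 < ν_n(N) < 1`,
`n cosh(4 artanh √(ν_n(N))) = 4N² + n`, and for `R > 0`,
`n cosh(4R) ≤ 4N² + n ↔ R ≤ artanh √(ν_n(N))`. -/
theorem stmt_6 (n N : ℝ) (hn : 0 < n) (hN : 0 < N) :
    0 < stmt6.nu n N ∧ stmt6.nu n N < 1 ∧
    n * Real.cosh (4 * stmt6.artanh (Real.sqrt (stmt6.nu n N))) = 4 * N ^ 2 + n ∧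
    ∀ R : ℝ, 0 < R →
      (n * Real.cosh (4 * R) ≤ 4 * N ^ 2 + n ↔ R ≤ stmt6.artanh (Real.sqrt (stmt6.nu n N))) := by
  set a := n / (2 * N ^ 2) with ha_def
  have ha : 0 < a := by positivity
  set u := Real.sqrt a with hu_def
  set v := Real.sqrt (1 + a) with hv_def
  have hu : 0 < u := Real.sqrt_pos.mpr ha
  have hu2 : u ^ 2 = a := Real.sq_sqrt ha.le
  have hv2 : v ^ 2 = 1 + u ^ 2 := by rw [hu2]; exact Real.sq_sqrt (by positivity)
  have hv : 1 < v := by nlinarith [Real.sqrt_nonneg (1 + a)]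
  have hs : 1 < v + u := by linarith
  have hs0 : v + u ≠ 0 := by linarith
  have hnu : stmt6.nu n N = ((v + u)⁻¹) ^ 2 := rfl
  have hx0 : 0 < (v + u)⁻¹ := by positivity
  have hx1 : (v + u)⁻¹ < 1 := by
    rw [inv_lt_one_iff₀]; right; exact hs
  have hsq : Real.sqrt (stmt6.nu n N) = (v + u)⁻¹ := by
    rw [hnu, Real.sqrt_sq hx0.le]
  have hna : 2 * N ^ 2 * u ^ 2 = n := by
    rw [hu2, ha_def]; field_simp
  set x := (v + u)⁻¹ with hx_def
  have e1 : (1 + x)/(1 - x) = (v+u+1)/(v+u-1) := by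
    rw [hx_def, div_eq_div_iff (by linarith) (by linarith)]
    field_simp
  have e2 : (1 - x)/(1 + x) = (v+u-1)/(v+u+1) := by
    rw [hx_def, div_eq_div_iff (by linarith) (by linarith)]
    field_simp
  have key : n * Real.cosh (4 * stmt6.artanh (Real.sqrt (stmt6.nu n N))) = 4 * N ^ 2 + n := by
    rw [hsq, stmt6.cosh_four_artanh _ hx0.le hx1, e1, e2]
    exact stmt6.key_alg n N u v hu hv hna hv2
  have ht : 0 < stmt6.artanh (Real.sqrt (stmt6.nu n N)) := by
    rw [hsq, stmt6.artanh]
    have : 1 < (1 + x)/(1 - x) := by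
      rw [lt_div_iff₀ (by linarith)]; linarith
    have := Real.log_pos this
    linarith
  refine ⟨by rw [hnu]; positivity, by rw [hnu]; exact pow_lt_one₀ hx0.le hx1 two_ne_zero, key, ?_⟩
  intro R hR
  set t := stmt6.artanh (Real.sqrt (stmt6.nu n N))
  rw [← key, mul_le_mul_iff_right₀ hn, Real.cosh_le_cosh, abs_of_pos (by linarith),
    abs_of_pos (by linarith)]
  constructor <;> intro h <;> linarith
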